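/- The elements σ = (1/(q+q⁻¹))(−q⁻⁷ − q⁻²U + q⁻⁴K + q⁻⁵H) and σ' = (1/(q+q⁻¹))(−q⁷ − q²U + q⁴K + q⁵H) of the algebra A(2) are mutually inverse: σσ' = σ'σ = 1. -/

import Mathlib

/-- The variable `q`, the generator of the field of rational functions `ℚ(q)`. -/
noncomputable def q : RatFunc ℚ := RatFunc.X

/-- The quantum integer `[n] = (q^n - q^{-n})/(q - q⁻¹)` in `ℚ(q)`. -/
noncomputable def qi (n : ℤ) : RatFunc ℚ := (q ^ n - q ^ (-n)) / (q - q⁻¹)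

open MvPolynomial in
/-- The ideal of relations defining the commutative algebra `A(2)`; the variables
`X 0`, `X 1`, `X 2` stand for `U`, `K`, `H`. -/
noncomputable def A2rel : Ideal (MvPolynomial (Fin 3) (RatFunc ℚ)) :=
  Ideal.span
    { X 0 * X 0 - C (qi 10 * qi 6 * qi 2 / (qi 5 * qi 3)) * X 0,
      X 0 * X 2 - C (qi 7) * X 0,
      X 0 * X 1,
      X 2 * X 2 - (C (qi 3) + C (qi 4 / qi 2) * X 2 + C (qi 4) * X 0 + C (qi 4) * X 1),
      X 2 * X 1 + C (qi 5) * X 1,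
      X 1 * X 1 - C (qi 2 ^ 2 * qi 6 / qi 3) * X 1 }

open MvPolynomial in
/-- The braid element `σ = (q+q⁻¹)⁻¹(−q⁻⁷ − q⁻²U + q⁻⁴K + q⁻⁵H)` in `A(2)`. -/
noncomputable def σ : MvPolynomial (Fin 3) (RatFunc ℚ) ⧸ A2rel :=
  Ideal.Quotient.mk A2rel
    (C ((q + q⁻¹)⁻¹) *
      (C (-(q ^ (-7 : ℤ))) + C (-(q ^ (-2 : ℤ))) * X 0
        + C (q ^ (-4 : ℤ)) * X 1 + C (q ^ (-5 : ℤ)) * X 2))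

open MvPolynomial in
/-- The braid element `σ' = (q+q⁻¹)⁻¹(−q⁷ − q²U + q⁴K + q⁵H)` in `A(2)`. -/
noncomputable def σ' : MvPolynomial (Fin 3) (RatFunc ℚ) ⧸ A2rel :=
  Ideal.Quotient.mk A2rel
    (C ((q + q⁻¹)⁻¹) *
      (C (-(q ^ (7 : ℤ))) + C (-(q ^ (2 : ℤ))) * X 0
        + C (q ^ (4 : ℤ)) * X 1 + C (q ^ (5 : ℤ)) * X 2))

lemma q_ne : q ≠ 0 := RatFunc.X_ne_zero

lemma alg_ne {p : Polynomial ℚ} (h : Polynomial.eval 0 p ≠ 0) :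
    algebraMap (Polynomial ℚ) (RatFunc ℚ) p ≠ 0 :=
  RatFunc.algebraMap_ne_zero (fun hc => h (by rw [hc]; simp))

lemma qpow_sub_one_ne (n : ℕ) (hn : 0 < n) : q ^ n - 1 ≠ 0 := by
  have : q ^ n - 1 = algebraMap (Polynomial ℚ) (RatFunc ℚ) (Polynomial.X ^ n - 1) := by
    simp [q, RatFunc.algebraMap_X]
  rw [this]
  exact alg_ne (by simp [zero_pow hn.ne'])

lemma qzpow_sub_ne (n : ℕ) (hn : 0 < n) : q ^ (n:ℤ) - q ^ (-(n:ℤ)) ≠ 0 := by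
  intro hc
  have h1 : q ^ n * (q ^ (n:ℤ) - q ^ (-(n:ℤ))) = q ^ (n+n) - 1 := by
    rw [zpow_neg, zpow_natCast, mul_sub, ← pow_add, mul_inv_cancel₀ (pow_ne_zero n q_ne)]
  rw [hc, mul_zero] at h1
  exact qpow_sub_one_ne (n+n) (by omega) h1.symm

lemma qsub_ne : q - q⁻¹ ≠ 0 := by simpa using qzpow_sub_ne 1 one_pos

lemma qadd_ne : q + q⁻¹ ≠ 0 := by
  intro hc
  have h1 : q * (q + q⁻¹) = q ^ 2 + 1 := by field_simp [q_ne]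
  rw [hc, mul_zero] at h1
  have h2 : q ^ 2 + 1 = algebraMap (Polynomial ℚ) (RatFunc ℚ) (Polynomial.X ^ 2 + 1) := by
    simp [q, RatFunc.algebraMap_X]
  rw [h2] at h1
  exact alg_ne (by simp) h1.symm

lemma qi3_ne : qi 3 ≠ 0 := by
  have h := qzpow_sub_ne 3 (by norm_num)
  norm_num at h
  exact div_ne_zero h qsub_ne

lemma qi5_ne : qi 5 ≠ 0 := by
  have h := qzpow_sub_ne 5 (by norm_num)
  norm_num at h
  exact div_ne_zero h qsub_ne

lemma qi2_ne : qi 2 ≠ 0 := by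
  have h := qzpow_sub_ne 2 (by norm_num)
  norm_num at h
  exact div_ne_zero h qsub_ne

lemma z7 : q ^ (-7:ℤ) = (q⁻¹)^7 := by rw [zpow_neg, zpow_ofNat, ← inv_pow]
lemma z2 : q ^ (-2:ℤ) = (q⁻¹)^2 := by rw [zpow_neg, zpow_ofNat, ← inv_pow]
lemma z4 : q ^ (-4:ℤ) = (q⁻¹)^4 := by rw [zpow_neg, zpow_ofNat, ← inv_pow]
lemma z5 : q ^ (-5:ℤ) = (q⁻¹)^5 := by rw [zpow_neg, zpow_ofNat, ← inv_pow]
lemma p7 : q ^ (7:ℤ) = q^7 := by rw [zpow_ofNat]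
lemma p2 : q ^ (2:ℤ) = q^2 := by rw [zpow_ofNat]
lemma p4 : q ^ (4:ℤ) = q^4 := by rw [zpow_ofNat]
lemma p5 : q ^ (5:ℤ) = q^5 := by rw [zpow_ofNat]

lemma s2q : qi 2 = q + q⁻¹ := by
  unfold qi
  rw [zpow_neg, div_eq_iff qsub_ne]
  simp only [zpow_ofNat, ← inv_pow]
  linear_combination (0) * mul_inv_cancel₀ q_ne

lemma s3q : qi 3 = q^2 + 1 + q⁻¹^2 := by
  unfold qi
  rw [zpow_neg, div_eq_iff qsub_ne]
  simp only [zpow_ofNat, ← inv_pow]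
  linear_combination (q + (-1)*q⁻¹) * mul_inv_cancel₀ q_ne

lemma s4q : qi 4 = q^3 + q + q⁻¹ + q⁻¹^3 := by
  unfold qi
  rw [zpow_neg, div_eq_iff qsub_ne]
  simp only [zpow_ofNat, ← inv_pow]
  linear_combination (q^2 + (-1)*q⁻¹^2) * mul_inv_cancel₀ q_ne

lemma s5q : qi 5 = q^4 + q^2 + 1 + q⁻¹^2 + q⁻¹^4 := by
  unfold qi
  rw [zpow_neg, div_eq_iff qsub_ne]
  simp only [zpow_ofNat, ← inv_pow]
  linear_combination (q^3 + q + (-1)*q⁻¹^3 + (-1)*q⁻¹) * mul_inv_cancel₀ q_ne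

lemma s6q : qi 6 = q^5 + q^3 + q + q⁻¹ + q⁻¹^3 + q⁻¹^5 := by
  unfold qi
  rw [zpow_neg, div_eq_iff qsub_ne]
  simp only [zpow_ofNat, ← inv_pow]
  linear_combination (q^4 + q^2 + (-1)*q⁻¹^4 + (-1)*q⁻¹^2) * mul_inv_cancel₀ q_ne

lemma s7q : qi 7 = q^6 + q^4 + q^2 + 1 + q⁻¹^2 + q⁻¹^4 + q⁻¹^6 := by
  unfold qi
  rw [zpow_neg, div_eq_iff qsub_ne]
  simp only [zpow_ofNat, ← inv_pow]
  linear_combination (q^5 + q^3 + q + (-1)*q⁻¹^5 + (-1)*q⁻¹^3 + (-1)*q⁻¹) * mul_inv_cancel₀ q_ne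

lemma s10q : qi 10 = q^9 + q^7 + q^5 + q^3 + q + q⁻¹ + q⁻¹^3 + q⁻¹^5 + q⁻¹^7 + q⁻¹^9 := by
  unfold qi
  rw [zpow_neg, div_eq_iff qsub_ne]
  simp only [zpow_ofNat, ← inv_pow]
  linear_combination (q^8 + q^6 + q^4 + q^2 + (-1)*q⁻¹^8 + (-1)*q⁻¹^6 + (-1)*q⁻¹^4 + (-1)*q⁻¹^2) * mul_inv_cancel₀ q_ne

lemma cUU : qi 10 * qi 6 * qi 2 / (qi 5 * qi 3)
    = (q^5 + q⁻¹^5) * (q^3 + q⁻¹^3) * (q + q⁻¹) := by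
  rw [div_eq_iff (mul_ne_zero qi5_ne qi3_ne), s10q, s6q, s2q, s5q, s3q]
  linear_combination ((-1)*q^12*q⁻¹ + (-2)*q^11*q⁻¹^2 + (-1)*q^11 + (-2)*q^10*q⁻¹^3 + (-4)*q^10*q⁻¹ + (-2)*q^9*q⁻¹^4 + (-5)*q^9*q⁻¹^2 + (-2)*q^9 + (-2)*q^8*q⁻¹^5 + (-5)*q^8*q⁻¹^3 + (-6)*q^8*q⁻¹ + (-3)*q^7*q⁻¹^6 + (-7)*q^7*q⁻¹^4 + (-8)*q^7*q⁻¹^2 + (-3)*q^7 + (-3)*q^6*q⁻¹^7 + (-6)*q^6*q⁻¹^5 + (-8)*q^6*q⁻¹^3 + (-7)*q^6*q⁻¹ + (-2)*q^5*q⁻¹^8 + (-6)*q^5*q⁻¹^6 + (-8)*q^5*q⁻¹^4 + (-7)*q^5*q⁻¹^2 + (-2)*q^5 + (-2)*q^4*q⁻¹^9 + (-7)*q^4*q⁻¹^7 + (-8)*q^4*q⁻¹^5 + (-7)*q^4*q⁻¹^3 + (-5)*q^4*q⁻¹ + (-2)*q^3*q⁻¹^10 + (-5)*q^3*q⁻¹^8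 + (-8)*q^3*q⁻¹^6 + (-7)*q^3*q⁻¹^4 + (-5)*q^3*q⁻¹^2 + (-1)*q^3 + (-2)*q^2*q⁻¹^11 + (-5)*q^2*q⁻¹^9 + (-8)*q^2*q⁻¹^7 + (-7)*q^2*q⁻¹^5 + (-5)*q^2*q⁻¹^3 + (-3)*q^2*q⁻¹ + (-1)*q*q⁻¹^12 + (-4)*q*q⁻¹^10 + (-6)*q*q⁻¹^8 + (-7)*q*q⁻¹^6 + (-5)*q*q⁻¹^4 + (-3)*q*q⁻¹^2 + (-1)*q⁻¹^11 + (-2)*q⁻¹^9 + (-3)*q⁻¹^7 + (-2)*q⁻¹^5 + (-1)*q⁻¹^3) * mul_inv_cancel₀ q_ne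

lemma c42 : qi 4 / qi 2 = q^2 + q⁻¹^2 := by
  rw [div_eq_iff qi2_ne, s4q, s2q]
  linear_combination ((-1)*q + (-1)*q⁻¹) * mul_inv_cancel₀ q_ne

lemma cKK : qi 2 ^ 2 * qi 6 / qi 3 = (q + q⁻¹)^2 * (q^3 + q⁻¹^3) := by
  rw [div_eq_iff qi3_ne, s2q, s6q, s3q]
  linear_combination ((-1)*q^4*q⁻¹ + (-3)*q^3*q⁻¹^2 + (-1)*q^3 + (-3)*q^2*q⁻¹^3 + (-3)*q^2*q⁻¹ + (-1)*q*q⁻¹^4 + (-3)*q*q⁻¹^2 + (-1)*q⁻¹^3) * mul_inv_cancel₀ q_ne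

open MvPolynomial in
lemma mem1 : (X 0 * X 0 - C (qi 10 * qi 6 * qi 2 / (qi 5 * qi 3)) * X 0 :
    MvPolynomial (Fin 3) (RatFunc ℚ)) ∈ A2rel := by
  unfold A2rel; exact Ideal.subset_span (Set.mem_insert _ _)

open MvPolynomial in
lemma mem2 : (X 0 * X 2 - C (qi 7) * X 0 : MvPolynomial (Fin 3) (RatFunc ℚ)) ∈ A2rel := by
  unfold A2rel
  exact Ideal.subset_span (Set.mem_insert_of_mem _ (Set.mem_insert _ _))

open MvPolynomial in
lemma mem3 : (X 0 * X 1 : MvPolynomial (Fin 3) (RatFunc ℚ)) ∈ A2rel := by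
  unfold A2rel
  exact Ideal.subset_span (Set.mem_insert_of_mem _ (Set.mem_insert_of_mem _ (Set.mem_insert _ _)))

open MvPolynomial in
lemma mem4 : (X 2 * X 2 - (C (qi 3) + C (qi 4 / qi 2) * X 2 + C (qi 4) * X 0 + C (qi 4) * X 1) :
    MvPolynomial (Fin 3) (RatFunc ℚ)) ∈ A2rel := by
  unfold A2rel
  exact Ideal.subset_span (Set.mem_insert_of_mem _ (Set.mem_insert_of_mem _
    (Set.mem_insert_of_mem _ (Set.mem_insert _ _))))

open MvPolynomial in
lemma mem5 : (X 2 * X 1 + C (qi 5) * X 1 : MvPolynomial (Fin 3) (RatFunc ℚ)) ∈ A2rel := by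
  unfold A2rel
  exact Ideal.subset_span (Set.mem_insert_of_mem _ (Set.mem_insert_of_mem _
    (Set.mem_insert_of_mem _ (Set.mem_insert_of_mem _ (Set.mem_insert _ _)))))

open MvPolynomial in
lemma mem5' : (X 2 * X 1 - (-(C (qi 5) * X 1)) : MvPolynomial (Fin 3) (RatFunc ℚ)) ∈ A2rel := by
  rw [sub_neg_eq_add]; exact mem5

open MvPolynomial in
lemma mem6 : (X 1 * X 1 - C (qi 2 ^ 2 * qi 6 / qi 3) * X 1 :
    MvPolynomial (Fin 3) (RatFunc ℚ)) ∈ A2rel := by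
  unfold A2rel
  exact Ideal.subset_span (Set.mem_insert_of_mem _ (Set.mem_insert_of_mem _
    (Set.mem_insert_of_mem _ (Set.mem_insert_of_mem _ (Set.mem_insert_of_mem _ rfl)))))

set_option maxHeartbeats 4000000 in
/-- `σ` and `σ'` are mutually inverse in `A(2)`. -/
theorem sigma_mutually_inverse : σ * σ' = 1 ∧ σ' * σ = 1 := by
  have key : σ * σ' = 1 := by
    unfold σ σ'
    have hu := Ideal.Quotient.eq.mpr mem1
    have huh := Ideal.Quotient.eq.mpr mem2
    have huk := Ideal.Quotient.eq_zero_iff_mem.mpr mem3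
    have hhh := Ideal.Quotient.eq.mpr mem4
    have hhk := Ideal.Quotient.eq.mpr mem5'
    have hkk := Ideal.Quotient.eq.mpr mem6
    rw [cUU] at hu
    rw [s7q] at huh
    rw [s3q, c42, s4q] at hhh
    rw [s5q] at hhk
    rw [cKK] at hkk
    have hab : Ideal.Quotient.mk A2rel (MvPolynomial.C q)
        * Ideal.Quotient.mk A2rel (MvPolynomial.C q⁻¹) = 1 := by
      rw [← map_mul, ← map_mul, mul_inv_cancel₀ q_ne, map_one, map_one]
    have hec : Ideal.Quotient.mk A2rel (MvPolynomial.C (q + q⁻¹)⁻¹)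
        * (Ideal.Quotient.mk A2rel (MvPolynomial.C q)
          + Ideal.Quotient.mk A2rel (MvPolynomial.C q⁻¹)) = 1 := by
      rw [← map_add, ← map_mul, ← map_add, ← map_mul, inv_mul_cancel₀ qadd_ne,
        map_one, map_one]
    rw [z7, z2, z4, z5, p7, p2, p4, p5]
    simp only [map_mul, map_add, map_neg, map_pow, map_one] at hu huh hhh hhk hkk huk ⊢
    set A := Ideal.Quotient.mk A2rel (MvPolynomial.C q) with hA
    set B := Ideal.Quotient.mk A2rel (MvPolynomial.C q⁻¹) with hB
    set E := Ideal.Quotient.mk A2rel (MvPolynomial.C (q + q⁻¹)⁻¹) with hE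
    set U := Ideal.Quotient.mk A2rel (MvPolynomial.X (0 : Fin 3)) with hU
    set K := Ideal.Quotient.mk A2rel (MvPolynomial.X (1 : Fin 3)) with hK
    set H := Ideal.Quotient.mk A2rel (MvPolynomial.X (2 : Fin 3)) with hH
    linear_combination (norm := ring1)
      (A^2*B^2*E^2) * hu +
      ((-1)*A^5*B^2*E^2 + (-1)*A^2*B^5*E^2) * huh +
      ((-1)*A^4*B^2*E^2 + (-1)*A^2*B^4*E^2) * huk +
      (A^5*B^5*E^2) * hhh +
      (A^5*B^4*E^2 + A^4*B^5*E^2) * hhk +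
      (A^4*B^4*E^2) * hkk +
      (A^9*B^2*E^2*U + A^7*B^4*E^2*U + 2*A^7*B^4*E^2*K + A^6*B^6*E^2 + A^6*B^5*E^2*U + A^6*B^5*E^2*K + A^6*B^4*E^2 + A^6*B^3*E^2*U + A^5*B^6*E^2*U + A^5*B^6*E^2*K + A^5*B^5*E^2 + A^5*B^4*E^2*U + A^5*B^4*E^2*K + A^5*B^3*E^2 + A^5*B^2*E^2*U + A^4*B^7*E^2*U + 2*A^4*B^7*E^2*K + A^4*B^6*E^2 + A^4*B^5*E^2*U + A^4*B^5*E^2*K + 2*A^4*B^4*E^2 + A^4*B^2*E^2 + A^3*B^6*E^2*U + A^3*B^5*E^2 + 2*A^3*B^3*E^2 + A^3*B*E^2 + A^2*B^9*E^2*U + A^2*B^5*E^2*U + A^2*B^4*E^2 + 2*A^2*B^2*E^2 + A^2*E^2 + A*B^3*E^2 + 2*A*B*E^2 + B^2*E^2) * hab +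
      (A*E + B*E + 1) * hec
  exact ⟨key, by rw [mul_comm]; exact key⟩
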